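/- arXiv:2102.13623 — 5 statements merged into one kernel-verified Lean document; each statement's English description precedes it below -/
import Mathlib

section
/- Let γ : ℝ → E be a twice differentiable magnetic curve with charge q, i.e. γ''(t) = -q·φ(γ'(t)) for all t. Then for each i ∈ {1,…,n} the quantity (γ'_i(t))² + (γ'_{n+i}(t))² is constant in t. -/
open scoped RealInnerProductSpace

/-- The structure tensor `φ` of the standard `C`-manifold structure on `ℝ^{2n+s}`:
`(φv)_i = v_{n+i}`, `(φv)_{n+i} = -v_i` for `0 ≤ i < n`, and `(φv)_{2n+α} = 0`. -/
noncomputable def phi (n s : ℕ) (v : EuclideanSpace ℝ (Fin (2*n+s))) :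
    EuclideanSpace ℝ (Fin (2*n+s)) := WithLp.toLp 2 fun k =>
  if _h1 : (k : ℕ) < n then v ⟨n + (k : ℕ), by omega⟩
  else if _h2 : (k : ℕ) < 2*n then -v ⟨(k : ℕ) - n, by omega⟩
  else 0

/-- The index `2n+α` of the characteristic direction `ξ_α = e_{2n+α}`. -/
def idxA (n s : ℕ) (α : Fin s) : Fin (2*n+s) := ⟨2*n + (α : ℕ), by omega⟩

/-- The index `i` for `1 ≤ i ≤ n` (0-based). -/
def idxI (n s : ℕ) (i : Fin n) : Fin (2*n+s) := ⟨(i : ℕ), by omega⟩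

/-- The index `n+i` for `1 ≤ i ≤ n` (0-based). -/
def idxNI (n s : ℕ) (i : Fin n) : Fin (2*n+s) := ⟨n + (i : ℕ), by omega⟩

/-! On the plane spanned by `e_i, e_{n+i}`, the magnetic equation reads `(x, y)' = -q (y, -x)`:
the velocity components rotate, so `x² + y²` has derivative `2(x·(-q y) + y·(q x)) = 0`. -/

theorem sq_add_sq_eq_of_hasDerivAt_rotation {f g c : ℝ → ℝ}
    (hf : ∀ t, HasDerivAt f (c t * g t) t) (hg : ∀ t, HasDerivAt g (-(c t * f t)) t)
    (t₁ t₂ : ℝ) : f t₁ ^ 2 + g t₁ ^ 2 = f t₂ ^ 2 + g t₂ ^ 2 := by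
  have hzero : ∀ t, HasDerivAt (fun t => f t ^ 2 + g t ^ 2) 0 t := fun t =>
    (((hf t).pow 2).add ((hg t).pow 2)).congr_deriv (by ring)
  exact is_const_of_deriv_eq_zero (fun t => (hzero t).differentiableAt)
    (fun t => (hzero t).deriv) t₁ t₂

theorem HasDerivAt.euclideanSpace_apply {ι : Type*} [Fintype ι]
    {f : ℝ → EuclideanSpace ℝ ι} {f' : EuclideanSpace ℝ ι} {t : ℝ}
    (hf : HasDerivAt f f' t) (k : ι) : HasDerivAt (fun t => f t k) (f' k) t :=
  (EuclideanSpace.proj (𝕜 := ℝ) k).hasFDerivAt.comp_hasDerivAt t hf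

theorem phi_apply_idxI (n s : ℕ) (v : EuclideanSpace ℝ (Fin (2*n+s))) (i : Fin n) :
    phi n s v (idxI n s i) = v (idxNI n s i) := by
  simp [phi, idxI, idxNI]

theorem phi_apply_idxNI (n s : ℕ) (v : EuclideanSpace ℝ (Fin (2*n+s))) (i : Fin n) :
    phi n s v (idxNI n s i) = -v (idxI n s i) := by
  have hi : n + (i : ℕ) < 2 * n := by omega
  simp [phi, idxI, idxNI, hi]

theorem magnetic_curve_horizontal_speed_constant_general
    (n s : ℕ) (q : ℝ)
    (γ : ℝ → EuclideanSpace ℝ (Fin (2*n+s)))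
    (hγ' : Differentiable ℝ (deriv γ))
    (hmag : ∀ t : ℝ, deriv (deriv γ) t = (-q) • phi n s (deriv γ t)) :
    ∀ i : Fin n, ∀ t₁ t₂ : ℝ,
      (deriv γ t₁ (idxI n s i)) ^ 2 + (deriv γ t₁ (idxNI n s i)) ^ 2 =
      (deriv γ t₂ (idxI n s i)) ^ 2 + (deriv γ t₂ (idxNI n s i)) ^ 2 := by
  intro i
  have hcoord : ∀ k t, HasDerivAt (fun t => deriv γ t k) ((-q) * phi n s (deriv γ t) k) t :=
    fun k t => by simpa [hmag t] using (hγ' t).hasDerivAt.euclideanSpace_apply k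
  refine sq_add_sq_eq_of_hasDerivAt_rotation (c := fun _ => -q) (fun t => ?_) (fun t => ?_)
  · simpa only [phi_apply_idxI] using hcoord (idxI n s i) t
  · simpa only [phi_apply_idxNI, mul_neg] using hcoord (idxNI n s i) t

/-- For a magnetic curve `γ'' = -q·φ(γ')` in the standard `C`-manifold `ℝ^{2n+s}`, the
quantity `(γ'_i)² + (γ'_{n+i})²` is constant in `t` for each `i ∈ {1,…,n}`. -/
theorem magnetic_curve_horizontal_speed_constant
    (n s : ℕ) (hn : 0 < n) (hs : 0 < s) (q : ℝ)
    (γ : ℝ → EuclideanSpace ℝ (Fin (2*n+s)))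
    (hγ : Differentiable ℝ γ) (hγ' : Differentiable ℝ (deriv γ))
    (hmag : ∀ t : ℝ, deriv (deriv γ) t = (-q) • phi n s (deriv γ t)) :
    ∀ i : Fin n, ∀ t₁ t₂ : ℝ,
      (deriv γ t₁ (idxI n s i)) ^ 2 + (deriv γ t₁ (idxNI n s i)) ^ 2 =
      (deriv γ t₂ (idxI n s i)) ^ 2 + (deriv γ t₂ (idxNI n s i)) ^ 2 :=
  magnetic_curve_horizontal_speed_constant_general n s q γ hγ' hmag
end

section
/- Let q ≠ 0 and let γ : ℝ → E be the curve with components γ_i(t) = (c_i/q)·sin(qt + d_i) + b_i, γ_{n+i}(t) = -(c_i/q)·cos(qt + d_i) + b_{n+i} (for i = 1,…,n), and γ_{2n+α}(t) = a_α·t + h_α (for α = 1,…,s). Then γ is unit speed (‖γ'(t)‖ = 1 for all t), i.e. a normal magnetic curve, if and only if Σ_{i=1}^{n} c_i² + Σ_{α=1}^{s} a_α² = 1. -/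
open scoped RealInnerProductSpace

/-! The velocity of `γ` has coordinates `c_i cos(qt + d_i)`, `c_i sin(qt + d_i)` and `a_α`, so by
`cos² + sin² = 1` its squared norm is the constant `Σ c_i² + Σ a_α²`. -/

section Indices

variable (n s : ℕ)

theorem bijective_sumElim_idx :
    Function.Bijective (Sum.elim (idxI n s) (Sum.elim (idxNI n s) (idxA n s))) := by
  refine (Fintype.bijective_iff_injective_and_card _).mpr ⟨?_, by simp; omega⟩
  rintro (i | i | α) (j | j | β) hij <;>
    simp only [Sum.elim_inl, Sum.elim_inr, idxI, idxNI, idxA, Fin.ext_iff, Sum.inl.injEq,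
      Sum.inr.injEq, reduceCtorEq] at hij ⊢ <;> omega

noncomputable def idxEquiv : Fin n ⊕ Fin n ⊕ Fin s ≃ Fin (2*n+s) :=
  Equiv.ofBijective _ (bijective_sumElim_idx n s)

theorem sum_fin_two_mul_add {M : Type*} [AddCommMonoid M] (f : Fin (2*n+s) → M) :
    ∑ k, f k = (∑ i, f (idxI n s i)) + (∑ i, f (idxNI n s i)) + ∑ α, f (idxA n s α) := by
  rw [← (idxEquiv n s).sum_comp, Fintype.sum_sum_type, Fintype.sum_sum_type, add_assoc]
  rfl

theorem forall_fin_two_mul_add {P : Fin (2*n+s) → Prop} :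
    (∀ k, P k) ↔ (∀ i, P (idxI n s i)) ∧ (∀ i, P (idxNI n s i)) ∧ ∀ α, P (idxA n s α) := by
  rw [← (idxEquiv n s).forall_congr_right, Sum.forall, Sum.forall]
  rfl

end Indices

theorem EuclideanSpace.deriv_apply {ι : Type*} [Fintype ι] {f : ℝ → EuclideanSpace ℝ ι} {t : ℝ}
    (hf : DifferentiableAt ℝ f t) (k : ι) : deriv f t k = deriv (fun u => f u k) t :=
  ((PiLp.hasFDerivAt_apply 2 (f t) k).comp_hasDerivAt t hf.hasDerivAt).deriv.symm

section Helix

open Real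

variable {q : ℝ} (c d b t : ℝ)

theorem hasDerivAt_div_mul_sin_add (hq : q ≠ 0) :
    HasDerivAt (fun u => c / q * sin (q * u + d) + b) (c * cos (q * t + d)) t := by
  have hsin := ((hasDerivAt_const_mul (x := t) q).add_const d).sin.const_mul (c / q)
  exact (hsin.add_const b).congr_deriv (by field_simp)

theorem hasDerivAt_neg_div_mul_cos_add (hq : q ≠ 0) :
    HasDerivAt (fun u => -(c / q) * cos (q * u + d) + b) (c * sin (q * t + d)) t := by
  have hcos := ((hasDerivAt_const_mul (x := t) q).add_const d).cos.const_mul (-(c / q))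
  exact (hcos.add_const b).congr_deriv (by field_simp)

end Helix

theorem sum_mul_cos_sq_add_sum_mul_sin_sq {ι : Type*} [Fintype ι] (c θ : ι → ℝ) :
    ∑ i, (c i * Real.cos (θ i)) ^ 2 + ∑ i, (c i * Real.sin (θ i)) ^ 2 = ∑ i, c i ^ 2 := by
  rw [← Finset.sum_add_distrib]
  refine Finset.sum_congr rfl fun i _ => ?_
  linear_combination c i ^ 2 * Real.cos_sq_add_sin_sq (θ i)

theorem parametrized_curve_unit_speed_iff_general
    (n s : ℕ) (q : ℝ) (hq : q ≠ 0)
    (c d b bb : Fin n → ℝ) (a h : Fin s → ℝ)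
    (γ : ℝ → EuclideanSpace ℝ (Fin (2*n+s)))
    (hγ1 : ∀ t : ℝ, ∀ i : Fin n,
      γ t (idxI n s i) = c i / q * Real.sin (q * t + d i) + b i)
    (hγ2 : ∀ t : ℝ, ∀ i : Fin n,
      γ t (idxNI n s i) = -(c i / q) * Real.cos (q * t + d i) + bb i)
    (hγ3 : ∀ t : ℝ, ∀ α : Fin s, γ t (idxA n s α) = a α * t + h α) :
    (∀ t : ℝ, ‖deriv γ t‖ = 1) ↔
      (∑ i : Fin n, (c i) ^ 2) + (∑ α : Fin s, (a α) ^ 2) = 1 := by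
  have hI (t : ℝ) (i : Fin n) :
      HasDerivAt (fun u => γ u (idxI n s i)) (c i * Real.cos (q * t + d i)) t := by
    simpa only [hγ1] using hasDerivAt_div_mul_sin_add (c i) (d i) (b i) t hq
  have hNI (t : ℝ) (i : Fin n) :
      HasDerivAt (fun u => γ u (idxNI n s i)) (c i * Real.sin (q * t + d i)) t := by
    simpa only [hγ2] using hasDerivAt_neg_div_mul_cos_add (c i) (d i) (bb i) t hq
  have hA (t : ℝ) (α : Fin s) : HasDerivAt (fun u => γ u (idxA n s α)) (a α) t := by
    simpa only [hγ3] using (hasDerivAt_const_mul (a α)).add_const (h α)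
  have hγ (t : ℝ) : DifferentiableAt ℝ γ t := differentiableAt_euclidean.mpr <|
    (forall_fin_two_mul_add n s).mpr ⟨fun i => (hI t i).differentiableAt,
      fun i => (hNI t i).differentiableAt, fun α => (hA t α).differentiableAt⟩
  have hnorm (t : ℝ) :
      ‖deriv γ t‖ ^ 2 = (∑ i : Fin n, (c i) ^ 2) + (∑ α : Fin s, (a α) ^ 2) := by
    rw [EuclideanSpace.real_norm_sq_eq, sum_fin_two_mul_add n s]
    simp only [EuclideanSpace.deriv_apply (hγ t), (hI t _).deriv, (hNI t _).deriv,
      (hA t _).deriv, sum_mul_cos_sq_add_sum_mul_sin_sq]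
  refine ⟨fun hunit => by rw [← hnorm 0, hunit 0, one_pow], fun hsum t => ?_⟩
  exact (pow_eq_one_iff_of_nonneg (norm_nonneg _) two_ne_zero).mp (by rw [hnorm t, hsum])

/-- The parametrized magnetic curve in `ℝ^{2n+s}` is unit speed (a normal magnetic curve)
if and only if `Σ_i c_i² + Σ_α a_α² = 1`. -/
theorem parametrized_curve_unit_speed_iff
    (n s : ℕ) (hn : 0 < n) (hs : 0 < s) (q : ℝ) (hq : q ≠ 0)
    (c d b bb : Fin n → ℝ) (a h : Fin s → ℝ)
    (γ : ℝ → EuclideanSpace ℝ (Fin (2*n+s)))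
    (hγ1 : ∀ t : ℝ, ∀ i : Fin n,
      γ t (idxI n s i) = c i / q * Real.sin (q * t + d i) + b i)
    (hγ2 : ∀ t : ℝ, ∀ i : Fin n,
      γ t (idxNI n s i) = -(c i / q) * Real.cos (q * t + d i) + bb i)
    (hγ3 : ∀ t : ℝ, ∀ α : Fin s, γ t (idxA n s α) = a α * t + h α) :
    (∀ t : ℝ, ‖deriv γ t‖ = 1) ↔
      (∑ i : Fin n, (c i) ^ 2) + (∑ α : Fin s, (a α) ^ 2) = 1 :=
  parametrized_curve_unit_speed_iff_general n s q hq c d b bb a h γ hγ1 hγ2 hγ3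
end

section
/- Let γ : ℝ → E be a twice differentiable unit-speed curve such that for each α ∈ {1,…,s} the component γ'_{2n+α}(t) equals a constant cos θ_α, and suppose Σ_{α=1}^{s} cos²θ_α = 1. Then γ'(t) = Σ_{α=1}^{s} cos θ_α · e_{2n+α} for all t (so γ is an integral curve of the constant vector field Σ_α cos θ_α ξ_α), γ is a geodesic (γ''(t) = 0 for all t), and γ satisfies the Lorentz equation γ''(t) = -q·φ(γ'(t)) for every q ∈ ℝ. -/
open scoped RealInnerProductSpace

/-- Viewing `ξ_α` as living in the second block of `Fin (2n + s) = Fin (2n) ⊕ Fin s` lets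
coordinate sums split along `Fin.sum_univ_add`. -/
lemma idxA_eq_natAdd (n s : ℕ) : idxA n s = Fin.natAdd (2 * n) := rfl

namespace EuclideanSpace

variable {m s : ℕ}

lemma apply_castAdd_eq_zero_of_norm_sq_eq_sum_natAdd (v : EuclideanSpace ℝ (Fin (m + s)))
    (h : ∑ α, v (Fin.natAdd m α) ^ 2 = ‖v‖ ^ 2) (i : Fin m) : v (Fin.castAdd s i) = 0 := by
  have hfirst : ∑ j, v (Fin.castAdd s j) ^ 2 = 0 := by
    rw [real_norm_sq_eq, Fin.sum_univ_add] at h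
    linarith
  exact pow_eq_zero_iff two_ne_zero |>.mp <|
    (Finset.sum_eq_zero_iff_of_nonneg fun j _ => sq_nonneg _).mp hfirst i (Finset.mem_univ i)

lemma eq_sum_natAdd_of_apply_castAdd_eq_zero {v : EuclideanSpace ℝ (Fin (m + s))}
    (h : ∀ i, v (Fin.castAdd s i) = 0) :
    v = ∑ α, v (Fin.natAdd m α) • single (Fin.natAdd m α) (1 : ℝ) := by
  ext k
  simp only [WithLp.ofLp_sum, WithLp.ofLp_smul, Finset.sum_apply, Pi.smul_apply, PiLp.ofLp_single,
    Pi.single_apply, smul_eq_mul, mul_ite, mul_one, mul_zero]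
  induction k using Fin.addCases with
  | left i =>
    refine (h i).trans (Finset.sum_eq_zero fun α _ => if_neg ?_).symm
    simp only [Fin.ext_iff, Fin.val_castAdd, Fin.val_natAdd]
    omega
  | right α => simp [Fin.natAdd_inj]

end EuclideanSpace

lemma phi_eq_zero_of_apply_castAdd_eq_zero {n s : ℕ} {v : EuclideanSpace ℝ (Fin (2 * n + s))}
    (h : ∀ i, v (Fin.castAdd s i) = 0) : phi n s v = 0 := by
  ext k
  simp only [phi, WithLp.ofLp_toLp]
  split_ifs with h₁ h₂
  · exact h ⟨n + k, by omega⟩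
  · exact neg_eq_zero.mpr (h ⟨k - n, by omega⟩)
  · rfl

theorem slant_curve_equality_case_general
    (n s : ℕ)
    (γ : ℝ → EuclideanSpace ℝ (Fin (2*n+s)))
    (hunit : ∀ t : ℝ, ‖deriv γ t‖ = 1)
    (θ : Fin s → ℝ)
    (hslant : ∀ t : ℝ, ∀ α : Fin s, deriv γ t (idxA n s α) = Real.cos (θ α))
    (hsum : ∑ α : Fin s, Real.cos (θ α) ^ 2 = 1) :
    (∀ t : ℝ, deriv γ t =
        ∑ α : Fin s, Real.cos (θ α) • EuclideanSpace.single (idxA n s α) (1 : ℝ)) ∧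
    (∀ t : ℝ, deriv (deriv γ) t = 0) ∧
    (∀ q : ℝ, ∀ t : ℝ, deriv (deriv γ) t = (-q) • phi n s (deriv γ t)) := by
  rw [idxA_eq_natAdd] at hslant ⊢
  have hhoriz (t : ℝ) (i : Fin (2 * n)) : deriv γ t (Fin.castAdd s i) = 0 :=
    EuclideanSpace.apply_castAdd_eq_zero_of_norm_sq_eq_sum_natAdd _
      (by simp only [hslant, hsum, hunit, one_pow]) i
  have hvel (t : ℝ) :
      deriv γ t = ∑ α, Real.cos (θ α) • EuclideanSpace.single (Fin.natAdd (2 * n) α) (1 : ℝ) := by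
    simpa only [hslant] using EuclideanSpace.eq_sum_natAdd_of_apply_castAdd_eq_zero (hhoriz t)
  have hgeod (t : ℝ) : deriv (deriv γ) t = 0 := by
    rw [funext hvel, deriv_const]
  refine ⟨hvel, hgeod, fun q t => ?_⟩
  rw [hgeod, phi_eq_zero_of_apply_castAdd_eq_zero (hhoriz t), smul_zero]

/-- Equality case of the slant inequality: a unit-speed `θ_α`-slant curve with
`Σ_α cos²θ_α = 1` is an integral curve of `Σ_α cos θ_α · ξ_α`, is a geodesic, and satisfies
the Lorentz equation `γ'' = -q·φ(γ')` for every charge `q`. -/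
theorem slant_curve_equality_case
    (n s : ℕ) (hn : 0 < n) (hs : 0 < s)
    (γ : ℝ → EuclideanSpace ℝ (Fin (2*n+s)))
    (hγ : Differentiable ℝ γ) (hγ' : Differentiable ℝ (deriv γ))
    (hunit : ∀ t : ℝ, ‖deriv γ t‖ = 1)
    (θ : Fin s → ℝ)
    (hslant : ∀ t : ℝ, ∀ α : Fin s, deriv γ t (idxA n s α) = Real.cos (θ α))
    (hsum : ∑ α : Fin s, Real.cos (θ α) ^ 2 = 1) :
    (∀ t : ℝ, deriv γ t =
        ∑ α : Fin s, Real.cos (θ α) • EuclideanSpace.single (idxA n s α) (1 : ℝ)) ∧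
    (∀ t : ℝ, deriv (deriv γ) t = 0) ∧
    (∀ q : ℝ, ∀ t : ℝ, deriv (deriv γ) t = (-q) • phi n s (deriv γ t)) :=
  slant_curve_equality_case_general n s γ hunit θ hslant hsum
end

section
/- Let q ≠ 0 and let γ : ℝ → E be a three-times differentiable unit-speed magnetic curve with charge q (γ''(t) = -q·φ(γ'(t)), ‖γ'(t)‖ = 1), with constant slant values cos θ_α = γ'_{2n+α} satisfying 0 < Σ_{α=1}^{s} cos²θ_α < 1. Set κ₁ = |q|·√(1 - Σ_α cos²θ_α). Then the second curvature of γ is the constant κ₂ = ‖γ'''(t)/κ₁ + κ₁·γ'(t)‖ = |q|·√(Σ_{α=1}^{s} cos²θ_α) for all t ∈ ℝ. -/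
open scoped RealInnerProductSpace

/-!
Differentiating `γ'' = -q φ γ'` gives `γ''' = q² φ²γ'`, and `φ² = -1` on the first `2n`
coordinates while `φ² = 0` on the characteristic directions `ξ_α`. Hence
`γ'''/κ₁ + κ₁γ'` is `(κ₁ - q²/κ₁)` times the horizontal part of `γ'` plus `κ₁` times its
vertical part; these have squared lengths `1 - C` and `C`, with `C = Σ cos²θ_α`, and
`κ₁² = q²(1 - C)` makes the squared norm collapse to `q²C`.
-/

section LinearODE

variable {E : Type*} [NormedAddCommGroup E] [NormedSpace ℝ E]

theorem deriv_deriv_eq_of_deriv_eq_clm_apply {g : ℝ → E} {t : ℝ} (A : E →L[ℝ] E)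
    (h : ∀ r, deriv g r = A (g r)) (hg : DifferentiableAt ℝ g t) :
    deriv (deriv g) t = A (A (g t)) := by
  calc deriv (deriv g) t = deriv (fun r => A (g r)) t := by rw [funext h]
    _ = A (deriv g t) := (A.hasFDerivAt.comp_hasDerivAt t hg.hasDerivAt).deriv
    _ = A (A (g t)) := by rw [h]

end LinearODE

namespace phi

variable {n s : ℕ}

theorem apply_idxA (v : EuclideanSpace ℝ (Fin (2*n+s))) (α : Fin s) :
    phi n s v (idxA n s α) = 0 := by
  simp only [phi, idxA, PiLp.toLp_apply]
  rw [dif_neg (by omega), dif_neg (by omega)]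

theorem phi_apply_castAdd (v : EuclideanSpace ℝ (Fin (2*n+s))) (i : Fin (2*n)) :
    phi n s (phi n s v) (Fin.castAdd s i) = -v (Fin.castAdd s i) := by
  simp only [phi, PiLp.toLp_apply, Fin.val_castAdd]
  rcases lt_or_ge (i : ℕ) n with h | h
  · rw [dif_pos h, dif_neg (by omega), dif_pos (by omega)]
    exact congrArg (fun j => -v j) (Fin.ext (by simp))
  · rw [dif_neg (by omega), dif_pos i.isLt, dif_pos (by omega)]
    exact congrArg (fun j => -v j) (Fin.ext (by simp; omega))

variable (n s) in
noncomputable def toCLM :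
    EuclideanSpace ℝ (Fin (2*n+s)) →L[ℝ] EuclideanSpace ℝ (Fin (2*n+s)) :=
  LinearMap.toContinuousLinearMap
  { toFun := phi n s
    map_add' := fun v w => by
      ext k
      simp only [phi, PiLp.add_apply, PiLp.toLp_apply]
      split_ifs <;> ring
    map_smul' := fun c v => by
      ext k
      simp only [phi, PiLp.smul_apply, smul_eq_mul, RingHom.id_apply, PiLp.toLp_apply]
      split_ifs <;> ring }

theorem toCLM_apply (v : EuclideanSpace ℝ (Fin (2*n+s))) : toCLM n s v = phi n s v := rfl

end phi

section Norm

variable {n s : ℕ}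

theorem EuclideanSpace.norm_sq_eq_sum_castAdd_add_sum_idxA (v : EuclideanSpace ℝ (Fin (2*n+s))) :
    ‖v‖ ^ 2 = ∑ i : Fin (2*n), v (Fin.castAdd s i) ^ 2 + ∑ α, v (idxA n s α) ^ 2 := by
  rw [EuclideanSpace.norm_sq_eq, Fin.sum_univ_add]
  simp only [Real.norm_eq_abs, sq_abs]
  rfl

theorem norm_smul_phi_phi_add_smul_sq (a b : ℝ) (u : EuclideanSpace ℝ (Fin (2*n+s))) :
    ‖a • phi n s (phi n s u) + b • u‖ ^ 2 =
      (b - a) ^ 2 * (‖u‖ ^ 2 - ∑ α, u (idxA n s α) ^ 2) + b ^ 2 * ∑ α, u (idxA n s α) ^ 2 := by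
  simp only [EuclideanSpace.norm_sq_eq_sum_castAdd_add_sum_idxA, PiLp.add_apply,
    PiLp.smul_apply, smul_eq_mul, phi.phi_apply_castAdd, phi.apply_idxA, add_sub_cancel_right,
    Finset.mul_sum]
  congr 1 <;> exact Finset.sum_congr rfl fun _ _ => by ring

end Norm

theorem sub_inv_mul_sq_mul_add_sq_mul_eq {κ q C : ℝ} (hC : C < 1)
    (hκ : κ ^ 2 = q ^ 2 * (1 - C)) :
    (κ - κ⁻¹ * q ^ 2) ^ 2 * (1 - C) + κ ^ 2 * C = q ^ 2 * C := by
  -- at `κ = 0` we get `q = 0`, and the junk value `0⁻¹ = 0` makes both sides vanish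
  rcases eq_or_ne κ 0 with rfl | hκ0
  · have hq : q ^ 2 = 0 := by nlinarith
    simp [hq]
  · field_simp
    linear_combination (κ ^ 2 - q ^ 2) * hκ

theorem normal_magnetic_curve_second_curvature_general
    (n s : ℕ) (q : ℝ)
    (γ : ℝ → EuclideanSpace ℝ (Fin (2*n+s)))
    (hγ' : Differentiable ℝ (deriv γ))
    (hmag : ∀ t : ℝ, deriv (deriv γ) t = (-q) • phi n s (deriv γ t))
    (hunit : ∀ t : ℝ, ‖deriv γ t‖ = 1)
    (θ : Fin s → ℝ)
    (hslant : ∀ t : ℝ, ∀ α : Fin s, deriv γ t (idxA n s α) = Real.cos (θ α))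
    (hC1 : ∑ α : Fin s, Real.cos (θ α) ^ 2 < 1)
    (κ₁ : ℝ)
    (hκ₁ : κ₁ = |q| * Real.sqrt (1 - ∑ α : Fin s, Real.cos (θ α) ^ 2)) :
    ∀ t : ℝ, ‖κ₁⁻¹ • deriv (deriv (deriv γ)) t + κ₁ • deriv γ t‖ =
      |q| * Real.sqrt (∑ α : Fin s, Real.cos (θ α) ^ 2) := by
  intro t
  set C := ∑ α : Fin s, Real.cos (θ α) ^ 2
  have hκ₁_sq : κ₁ ^ 2 = q ^ 2 * (1 - C) := by
    rw [hκ₁, mul_pow, sq_abs, Real.sq_sqrt (by linarith)]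
  have hγ''' : deriv (deriv (deriv γ)) t = q ^ 2 • phi n s (phi n s (deriv γ t)) := by
    rw [deriv_deriv_eq_of_deriv_eq_clm_apply ((-q) • phi.toCLM n s) hmag (hγ' t)]
    simp only [smul_apply, phi.toCLM_apply, map_smul, smul_smul]
    ring_nf
  have hvertical : ∑ α, deriv γ t (idxA n s α) ^ 2 = C := by simp only [hslant t, C]
  have hnorm_sq : ‖κ₁⁻¹ • deriv (deriv (deriv γ)) t + κ₁ • deriv γ t‖ ^ 2 = q ^ 2 * C := by
    rw [hγ''', smul_smul, norm_smul_phi_phi_add_smul_sq, hunit t, hvertical, one_pow,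
      sub_inv_mul_sq_mul_add_sq_mul_eq hC1 hκ₁_sq]
  rw [← Real.sqrt_sq (norm_nonneg _), hnorm_sq, Real.sqrt_mul (sq_nonneg q), Real.sqrt_sq_eq_abs]

/-- Second curvature of a non-geodesic, non-Legendre normal magnetic curve in the standard
`C`-manifold `ℝ^{2n+s}`: `κ₂ = ‖γ'''/κ₁ + κ₁·γ'‖ = |q|·√(Σ_α cos²θ_α)`. -/
theorem normal_magnetic_curve_second_curvature
    (n s : ℕ) (hn : 0 < n) (hs : 0 < s) (q : ℝ) (hq : q ≠ 0)
    (γ : ℝ → EuclideanSpace ℝ (Fin (2*n+s)))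
    (hγ : Differentiable ℝ γ) (hγ' : Differentiable ℝ (deriv γ))
    (hγ'' : Differentiable ℝ (deriv (deriv γ)))
    (hmag : ∀ t : ℝ, deriv (deriv γ) t = (-q) • phi n s (deriv γ t))
    (hunit : ∀ t : ℝ, ‖deriv γ t‖ = 1)
    (θ : Fin s → ℝ)
    (hslant : ∀ t : ℝ, ∀ α : Fin s, deriv γ t (idxA n s α) = Real.cos (θ α))
    (hC0 : 0 < ∑ α : Fin s, Real.cos (θ α) ^ 2)
    (hC1 : ∑ α : Fin s, Real.cos (θ α) ^ 2 < 1)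
    (κ₁ : ℝ)
    (hκ₁ : κ₁ = |q| * Real.sqrt (1 - ∑ α : Fin s, Real.cos (θ α) ^ 2)) :
    ∀ t : ℝ, ‖κ₁⁻¹ • deriv (deriv (deriv γ)) t + κ₁ • deriv γ t‖ =
      |q| * Real.sqrt (∑ α : Fin s, Real.cos (θ α) ^ 2) :=
  normal_magnetic_curve_second_curvature_general n s q γ hγ' hmag hunit θ hslant hC1 κ₁ hκ₁
end

section
/- Let γ : ℝ → E be a unit-speed curve and v₂, v₃ : ℝ → E differentiable maps such that for every t the vectors {γ'(t), v₂(t), v₃(t)} are orthonormal, and suppose there are positive functions κ₁, κ₂ : ℝ → ℝ with γ''(t) = κ₁(t)·v₂(t), v₂'(t) = -κ₁(t)·γ'(t) + κ₂(t)·v₃(t), and v₃'(t) = -κ₂(t)·v₂(t) (Frenet curve of osculating order 3). If γ is a Legendre curve, i.e. γ'_{2n+α}(t) = 0 for all t and all α ∈ {1,…,s}, then also (v₂(t))_{2n+α} = 0 and (v₃(t))_{2n+α} = 0 for all t and all α; that is, each ξ_α = e_{2n+α} is orthogonal to the span of {T, v₂, v₃}. -/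
open scoped RealInnerProductSpace

theorem EuclideanSpace.deriv_apply_eq_zero_of_apply_eq_zero {ι : Type*} [Fintype ι]
    {f : ℝ → EuclideanSpace ℝ ι} (hf : Differentiable ℝ f) {k : ι} (hk : ∀ u, f u k = 0)
    (t : ℝ) : deriv f t k = 0 := by
  rw [EuclideanSpace.deriv_apply (hf t), funext hk, deriv_const]

theorem legendre_frenet_curve_xi_orthogonal_frame_general
    (n s : ℕ)
    (γ v₂ v₃ : ℝ → EuclideanSpace ℝ (Fin (2*n+s)))
    (hγ' : Differentiable ℝ (deriv γ))
    (hv₂ : Differentiable ℝ v₂)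
    (κ₁ κ₂ : ℝ → ℝ) (hκ₁pos : ∀ t : ℝ, 0 < κ₁ t) (hκ₂pos : ∀ t : ℝ, 0 < κ₂ t)
    (hfr1 : ∀ t : ℝ, deriv (deriv γ) t = κ₁ t • v₂ t)
    (hfr2 : ∀ t : ℝ, deriv v₂ t = (-κ₁ t) • deriv γ t + κ₂ t • v₃ t)
    (hleg : ∀ t : ℝ, ∀ α : Fin s, deriv γ t (idxA n s α) = 0) :
    ∀ t : ℝ, ∀ α : Fin s, v₂ t (idxA n s α) = 0 ∧ v₃ t (idxA n s α) = 0 := by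
  intro t α
  have hv₂α : ∀ u, v₂ u (idxA n s α) = 0 := fun u => by
    have h := EuclideanSpace.deriv_apply_eq_zero_of_apply_eq_zero hγ' (fun w => hleg w α) u
    rw [hfr1] at h
    simpa [(hκ₁pos u).ne'] using h
  refine ⟨hv₂α t, ?_⟩
  have h := EuclideanSpace.deriv_apply_eq_zero_of_apply_eq_zero hv₂ hv₂α t
  rw [hfr2] at h
  simpa [hleg t α, (hκ₂pos t).ne'] using h

/-- For a Legendre Frenet curve of osculating order 3 in the standard `C`-manifold
`ℝ^{2n+s}`, each `ξ_α = e_{2n+α}` is orthogonal to the span of `{T, v₂, v₃}`. -/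
theorem legendre_frenet_curve_xi_orthogonal_frame
    (n s : ℕ) (hn : 0 < n) (hs : 0 < s)
    (γ v₂ v₃ : ℝ → EuclideanSpace ℝ (Fin (2*n+s)))
    (hγ : Differentiable ℝ γ) (hγ' : Differentiable ℝ (deriv γ))
    (hv₂ : Differentiable ℝ v₂) (hv₃ : Differentiable ℝ v₃)
    (hunit : ∀ t : ℝ, ‖deriv γ t‖ = 1)
    (horth : ∀ t : ℝ, ‖v₂ t‖ = 1 ∧ ‖v₃ t‖ = 1 ∧
      ⟪deriv γ t, v₂ t⟫ = 0 ∧ ⟪deriv γ t, v₃ t⟫ = 0 ∧ ⟪v₂ t, v₃ t⟫ = 0)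
    (κ₁ κ₂ : ℝ → ℝ) (hκ₁pos : ∀ t : ℝ, 0 < κ₁ t) (hκ₂pos : ∀ t : ℝ, 0 < κ₂ t)
    (hfr1 : ∀ t : ℝ, deriv (deriv γ) t = κ₁ t • v₂ t)
    (hfr2 : ∀ t : ℝ, deriv v₂ t = (-κ₁ t) • deriv γ t + κ₂ t • v₃ t)
    (hfr3 : ∀ t : ℝ, deriv v₃ t = (-κ₂ t) • v₂ t)
    (hleg : ∀ t : ℝ, ∀ α : Fin s, deriv γ t (idxA n s α) = 0) :
    ∀ t : ℝ, ∀ α : Fin s, v₂ t (idxA n s α) = 0 ∧ v₃ t (idxA n s α) = 0 :=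
  legendre_frenet_curve_xi_orthogonal_frame_general n s γ v₂ v₃ hγ' hv₂ κ₁ κ₂ hκ₁pos hκ₂pos hfr1
    hfr2 hleg
end
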